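/- arXiv:math/0008148 — 2 statements merged into one kernel-verified Lean document; each statement's English description precedes it below -/
import Mathlib

section
/- For every real b > 0, the function w ↦ e^{-2izw} / (sinh(wb)·sinh(w/b)·w) is integrable along the horizontal line ℝ + iε for every ε with 0 < ε < π·min(b, b^{-1}) and every complex z with |Im z| < (b + b^{-1})/2, and the value of the contour integral ∫_{ℝ+iε} e^{-2izw} dw / (sinh(wb)·sinh(w/b)·w) is independent of the choice of ε in that range. -/
/-!
For `y > 0` and `|t| ≥ max b b⁻¹`, the identity `|sinh (x + iy)|² = sinh² x + sin² y` bounds the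
two hyperbolic sines at `t + iy` below by `e^{|t| b} / 4` and `e^{|t| / b} / 4`, while the numerator
is at most `e^{2 |Re z| y + 2 |Im z| |t|}`. So the integrand decays like
`e^{-(b + b⁻¹ - 2 |Im z|) |t|}`, uniformly for `y` in a compact subset of `(0, ∞)`. This gives
integrability along each line and makes the vertical sides of the rectangles `[-T, T] × [ε₁, ε₂]`
negligible as `T → ∞`. In the strip `0 < Im w < π min(b, b⁻¹)` none of `sinh (w b)`,
`sinh (w / b)`, `w` vanishes, so the integrand is holomorphic there and Cauchy's theorem on these
rectangles shows that the integral does not depend on `ε`.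
-/

noncomputable section
open Complex MeasureTheory Filter Topology

/-- The integrand of the contour-integral definition of the non-compact quantum
dilogarithm: `w ↦ exp (-2 i z w) / (sinh (w b) * sinh (w / b) * w)`. -/
def qdlIntegrand (b z w : ℂ) : ℂ :=
  Complex.exp (-2 * Complex.I * z * w) / (Complex.sinh (w * b) * Complex.sinh (w / b) * w)

open Set Interval

theorem integral_add_mul_I_eq_of_tendsto_verticalIntegral {E : Type*} [NormedAddCommGroup E]
    [NormedSpace ℂ E] {f : ℂ → E} {y₁ y₂ : ℝ} (hf : DifferentiableOn ℂ f (im ⁻¹' [[y₁, y₂]]))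
    (h₁ : Integrable fun x : ℝ => f (x + y₁ * I)) (h₂ : Integrable fun x : ℝ => f (x + y₂ * I))
    (hvert : Tendsto (fun x : ℝ => ∫ y in y₁..y₂, f (x + y * I)) (cocompact ℝ) (𝓝 0)) :
    ∫ x : ℝ, f (x + y₁ * I) = ∫ x : ℝ, f (x + y₂ * I) := by
  have hrect (T : ℝ) : (∫ x in -T..T, f (x + y₁ * I)) - (∫ x in -T..T, f (x + y₂ * I)) =
      I • (∫ y in y₁..y₂, f (-T + y * I)) - I • (∫ y in y₁..y₂, f (T + y * I)) := by
    have H := integral_boundary_rect_eq_zero_of_differentiableOn f (-T + y₁ * I) (T + y₂ * I)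
      (hf.mono fun w hw => by simpa using hw.2)
    simp only [add_re, add_im, neg_re, neg_im, ofReal_re, ofReal_im, mul_re, mul_im, I_re, I_im,
      mul_zero, mul_one, sub_zero, zero_add, add_zero, neg_zero, ofReal_neg] at H
    linear_combination (norm := module) H
  have hlim := (intervalIntegral_tendsto_integral h₁ tendsto_neg_atTop_atBot tendsto_id).sub
    (intervalIntegral_tendsto_integral h₂ tendsto_neg_atTop_atBot tendsto_id)
  have hzero : Tendsto (fun T : ℝ => (∫ x in -T..T, f (x + y₁ * I)) -
      ∫ x in -T..T, f (x + y₂ * I)) atTop (𝓝 0) := by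
    simp only [hrect]
    have hbot := hvert.comp (tendsto_neg_atTop_atBot.mono_right atBot_le_cocompact)
    have htop := hvert.comp (tendsto_id.mono_right atTop_le_cocompact)
    simpa using (hbot.const_smul I).sub (htop.const_smul I)
  exact sub_eq_zero.mp (tendsto_nhds_unique hlim hzero)

theorem Complex.sq_norm_sinh (w : ℂ) :
    ‖sinh w‖ ^ 2 = Real.sinh w.re ^ 2 + Real.sin w.im ^ 2 := by
  conv_lhs => rw [← re_add_im w]
  rw [sinh_add, sinh_mul_I, cosh_mul_I, ← ofReal_sinh, ← ofReal_cosh, ← ofReal_sin, ← ofReal_cos,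
    Complex.sq_norm, normSq_apply]
  simp only [add_re, add_im, mul_re, mul_im, ofReal_re, ofReal_im, I_re, I_im]
  nlinarith [Real.sin_sq_add_cos_sq w.im, Real.cosh_sq w.re]

theorem Complex.abs_sinh_re_le_norm_sinh (w : ℂ) : |Real.sinh w.re| ≤ ‖sinh w‖ := by
  rw [← abs_norm, ← sq_le_sq, sq_norm_sinh]
  exact le_add_of_nonneg_right (sq_nonneg _)

theorem Complex.abs_sin_im_le_norm_sinh (w : ℂ) : |Real.sin w.im| ≤ ‖sinh w‖ := by
  rw [← abs_norm, ← sq_le_sq, sq_norm_sinh]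
  exact le_add_of_nonneg_left (sq_nonneg _)

theorem Complex.sinh_ne_zero_of_im_mem_Ioo {w : ℂ} (hw : w.im ∈ Ioo 0 Real.pi) : sinh w ≠ 0 := by
  intro h
  have := abs_sin_im_le_norm_sinh w
  rw [h, norm_zero, abs_nonpos_iff] at this
  exact (Real.sin_pos_of_pos_of_lt_pi hw.1 hw.2).ne' this

theorem Real.exp_abs_div_four_le_abs_sinh {x : ℝ} (hx : 1 ≤ |x|) : exp |x| / 4 ≤ |sinh x| := by
  rw [abs_sinh, sinh_eq]
  have h₁ : exp (-|x|) ≤ 1 := exp_le_one_iff.2 (by linarith)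
  have h₂ : 2 ≤ exp |x| := by linarith [add_one_le_exp |x|]
  linarith

theorem integrable_exp_neg_mul_abs {δ : ℝ} (hδ : 0 < δ) :
    Integrable fun t : ℝ => Real.exp (-δ * |t|) := by
  rw [← integrableOn_univ, ← Iic_union_Ioi (a := (0 : ℝ))]
  refine IntegrableOn.union ?_ ?_
  · refine (integrableOn_exp_mul_Iic hδ 0).congr_fun (fun t ht => ?_) measurableSet_Iic
    rw [abs_of_nonpos ht, mul_neg, neg_mul, neg_neg]
  · refine (integrableOn_exp_mul_Ioi (neg_neg_of_pos hδ) 0).congr_fun (fun t ht => ?_)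
      measurableSet_Ioi
    rw [abs_of_pos ht]

section qdl

variable {b : ℝ}

theorem qdlIntegrand_denom_ne_zero (hb : 0 < b) {w : ℂ}
    (hw : w.im ∈ Ioo 0 (Real.pi * min b b⁻¹)) : sinh (w * b) * sinh (w / b) * w ≠ 0 := by
  obtain ⟨him₀, him⟩ := hw
  have hlt₁ : w.im * b < Real.pi := by
    rw [← lt_div_iff₀ hb, div_eq_mul_inv]
    exact him.trans_le (by gcongr; exact min_le_right _ _)
  have hlt₂ : w.im / b < Real.pi := by
    rw [div_lt_iff₀ hb]
    exact him.trans_le (by gcongr; exact min_le_left _ _)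
  refine mul_ne_zero (mul_ne_zero ?_ ?_) ?_
  · exact sinh_ne_zero_of_im_mem_Ioo (by simpa using ⟨mul_pos him₀ hb, hlt₁⟩)
  · exact sinh_ne_zero_of_im_mem_Ioo (by simpa using ⟨div_pos him₀ hb, hlt₂⟩)
  · rintro rfl
    simp at him₀

theorem differentiableOn_qdlIntegrand (hb : 0 < b) (z : ℂ) :
    DifferentiableOn ℂ (qdlIntegrand b z) (im ⁻¹' Ioo 0 (Real.pi * min b b⁻¹)) :=
  .div (by fun_prop) (by fun_prop) fun _ hw => qdlIntegrand_denom_ne_zero hb hw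

theorem norm_qdlIntegrand_le (hb : 0 < b) (z : ℂ) {y₁ y₂ : ℝ} (hy₁ : 0 < y₁) {w : ℂ}
    (hw₁ : y₁ ≤ w.im) (hw₂ : w.im ≤ y₂) (hre : max b b⁻¹ ≤ |w.re|) :
    ‖qdlIntegrand b z w‖ ≤
      16 / y₁ * Real.exp (2 * |z.re| * y₂) * Real.exp (-(b + b⁻¹ - 2 * |z.im|) * |w.re|) := by
  have hnum : ‖exp (-2 * I * z * w)‖ ≤ Real.exp (2 * |z.re| * y₂ + 2 * |z.im| * |w.re|) := by
    have hexp_re : (-2 * I * z * w).re = 2 * (z.re * w.im + z.im * w.re) := by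
      simp [mul_re, mul_im]
      ring
    rw [norm_exp, Real.exp_le_exp, hexp_re]
    nlinarith [le_abs_self z.re, le_abs_self (z.im * w.re), abs_mul z.im w.re, abs_nonneg z.re]
  have hsinh₁ : Real.exp (|w.re| * b) / 4 ≤ ‖sinh (w * b)‖ := by
    have h : |(w * b).re| = |w.re| * b := by simp [abs_mul, abs_of_pos hb]
    rw [← h]
    refine (Real.exp_abs_div_four_le_abs_sinh ?_).trans (abs_sinh_re_le_norm_sinh _)
    rw [h, ← inv_mul_cancel₀ hb.ne']
    exact mul_le_mul_of_nonneg_right ((le_max_right _ _).trans hre) hb.le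
  have hsinh₂ : Real.exp (|w.re| / b) / 4 ≤ ‖sinh (w / b)‖ := by
    have h : |(w / b).re| = |w.re| / b := by simp [abs_div, abs_of_pos hb]
    rw [← h]
    refine (Real.exp_abs_div_four_le_abs_sinh ?_).trans (abs_sinh_re_le_norm_sinh _)
    rw [h, one_le_div hb]
    exact (le_max_left _ _).trans hre
  have hw : y₁ ≤ ‖w‖ := hw₁.trans ((le_abs_self _).trans (abs_im_le_norm w))
  calc ‖qdlIntegrand b z w‖
      ≤ Real.exp (2 * |z.re| * y₂ + 2 * |z.im| * |w.re|) /
          (Real.exp (|w.re| * b) / 4 * (Real.exp (|w.re| / b) / 4) * y₁) := by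
        rw [qdlIntegrand, norm_div, norm_mul, norm_mul]
        gcongr
    _ = 16 / y₁ * Real.exp (2 * |z.re| * y₂) * Real.exp (-(b + b⁻¹ - 2 * |z.im|) * |w.re|) := by
        rw [show -(b + b⁻¹ - 2 * |z.im|) * |w.re| = 2 * |z.im| * |w.re| - (|w.re| * b + |w.re| / b)
          by ring, Real.exp_sub, Real.exp_add, Real.exp_add]
        field_simp
        ring

theorem integrable_qdlIntegrand (hb : 0 < b) {z : ℂ} (hz : |z.im| < (b + b⁻¹) / 2) {ε : ℝ}
    (hε : ε ∈ Ioo 0 (Real.pi * min b b⁻¹)) :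
    Integrable fun t : ℝ => qdlIntegrand b z (t + ε * I) := by
  have hcont : Continuous fun t : ℝ => qdlIntegrand b z (t + ε * I) :=
    (differentiableOn_qdlIntegrand hb z).continuousOn.comp_continuous (by fun_prop)
      fun t => by simpa using hε
  refine hcont.locallyIntegrable.integrable_of_isBigO_cocompact
    (g := fun t => Real.exp (-(b + b⁻¹ - 2 * |z.im|) * |t|)) ?_
    ((integrable_exp_neg_mul_abs (by linarith)).integrableAtFilter _)
  refine Asymptotics.IsBigO.of_bound (16 / ε * Real.exp (2 * |z.re| * ε)) ?_
  filter_upwards [tendsto_norm_cocompact_atTop.eventually_ge_atTop (max b b⁻¹)] with t ht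
  simpa [abs_of_pos (Real.exp_pos _)] using
    norm_qdlIntegrand_le hb z hε.1 (w := t + ε * I) (by simp) (by simp) (by simpa using ht)

theorem tendsto_verticalIntegral_qdlIntegrand (hb : 0 < b) {z : ℂ}
    (hz : |z.im| < (b + b⁻¹) / 2) {ε₁ ε₂ : ℝ} (h₁ : 0 < ε₁) (h₂ : 0 < ε₂) :
    Tendsto (fun x : ℝ => ∫ y in ε₁..ε₂, qdlIntegrand b z (x + y * I)) (cocompact ℝ) (𝓝 0) := by
  set δ := b + b⁻¹ - 2 * |z.im|
  set C := 16 / min ε₁ ε₂ * Real.exp (2 * |z.re| * max ε₁ ε₂)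
  have hδ : 0 < δ := by linarith
  have hdecay :
      Tendsto (fun x : ℝ => C * Real.exp (-δ * |x|) * |ε₂ - ε₁|) (cocompact ℝ) (𝓝 0) := by
    have h := Real.tendsto_exp_atBot.comp <| tendsto_neg_atTop_atBot.comp <|
      (tendsto_norm_cocompact_atTop (E := ℝ)).const_mul_atTop hδ
    simpa using (h.const_mul C).mul_const |ε₂ - ε₁|
  refine squeeze_zero_norm' ?_ hdecay
  filter_upwards [tendsto_norm_cocompact_atTop.eventually_ge_atTop (max b b⁻¹)] with x hx
  refine intervalIntegral.norm_integral_le_of_norm_le_const fun y hy => ?_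
  have hy' : y ∈ Icc (min ε₁ ε₂) (max ε₁ ε₂) := uIoc_subset_uIcc hy
  refine (norm_qdlIntegrand_le hb z (lt_min h₁ h₂) (y₂ := max ε₁ ε₂) (w := x + y * I)
    (by simpa using hy'.1) (by simpa using hy'.2) (by simpa using hx)).trans_eq ?_
  simp [C, δ]

end qdl

/-- For every real `b > 0`, the integrand `w ↦ e^{-2izw}/(sinh(wb) sinh(w/b) w)` is
integrable along each horizontal line `ℝ + iε` with `0 < ε < π min(b, b⁻¹)`, for every
complex `z` with `|Im z| < (b + b⁻¹)/2`, and the value of the contour integral does not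
depend on the choice of such `ε`. -/
theorem qdl_integrand_integrable_and_integral_indep_of_eps
    (b : ℝ) (hb : 0 < b) (z : ℂ) (hz : |z.im| < (b + b⁻¹) / 2) :
    (∀ ε : ℝ, 0 < ε → ε < Real.pi * min b b⁻¹ →
      Integrable (fun t : ℝ => qdlIntegrand (b : ℂ) z ((t : ℂ) + (ε : ℂ) * Complex.I))) ∧
    (∀ ε₁ ε₂ : ℝ, 0 < ε₁ → ε₁ < Real.pi * min b b⁻¹ → 0 < ε₂ → ε₂ < Real.pi * min b b⁻¹ →
      (∫ t : ℝ, qdlIntegrand (b : ℂ) z ((t : ℂ) + (ε₁ : ℂ) * Complex.I)) =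
      ∫ t : ℝ, qdlIntegrand (b : ℂ) z ((t : ℂ) + (ε₂ : ℂ) * Complex.I)) := by
  refine ⟨fun ε h₀ h₁ => integrable_qdlIntegrand hb hz ⟨h₀, h₁⟩, fun ε₁ ε₂ h₁ h₁' h₂ h₂' => ?_⟩
  have hstrip : [[ε₁, ε₂]] ⊆ Ioo 0 (Real.pi * min b b⁻¹) :=
    ordConnected_Ioo.uIcc_subset ⟨h₁, h₁'⟩ ⟨h₂, h₂'⟩
  exact integral_add_mul_I_eq_of_tendsto_verticalIntegral
    ((differentiableOn_qdlIntegrand hb z).mono (preimage_mono hstrip))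
    (integrable_qdlIntegrand hb hz ⟨h₁, h₁'⟩) (integrable_qdlIntegrand hb hz ⟨h₂, h₂'⟩)
    (tendsto_verticalIntegral_qdlIntegrand hb hz h₁ h₂)
end
end

section
/- Let b be a complex number with Re b > 0 which is either real or of modulus one. Then for every z in the strip |Im z| < Im c_b (so that z̄ also lies in the strip), the unitarity relation conj(e_b(z)) = 1 / e_b(z̄) holds; in particular, for b real and x real, |e_b(x)| = 1. -/
/-!
When `b` is real or `|b| = 1`, conjugation permutes `{b, b⁻¹}`, and the integrand is symmetric
under `b ↔ b⁻¹`, so conjugating it only conjugates `z` and `w` (and flips the sign of `z`).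
Conjugation sends the contour `ℝ + iε` to `ℝ - iε`; the reflection `w ↦ -w` brings it back and,
since the integrand is odd under `(z, w) ↦ (-z, -w)`, produces a sign. Hence the exponent of
`conj (e_b z)` is minus the exponent of `e_b (conj z)`.
-/

noncomputable section
open Complex MeasureTheory Filter Topology

/-- The non-compact quantum dilogarithm `e_b(z)`, defined by the contour integral over the
horizontal line `ℝ + iε`, with the canonical (sufficiently small) admissible choice
`ε = (π/2) * min (Re b) (Re b⁻¹)` (the integral is independent of such `ε`). -/
def qdl (b z : ℂ) : ℂ :=
  Complex.exp ((1 / 4) *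
    ∫ t : ℝ, qdlIntegrand b z ((t : ℂ) + ((Real.pi / 2 * min b.re (1 / b).re : ℝ) : ℂ) * Complex.I))

theorem Complex.norm_eq_one_of_conj_eq_inv {q : ℂ} (hq : q ≠ 0) (h : starRingEnd ℂ q = q⁻¹) :
    ‖q‖ = 1 := by
  have hnorm : ‖q‖⁻¹ = ‖q‖ := by rw [← norm_inv, ← h, Complex.norm_conj]
  have hsq : ‖q‖ * ‖q‖ = 1 :=
    calc ‖q‖ * ‖q‖ = ‖q‖ * ‖q‖⁻¹ := congrArg _ hnorm.symm
      _ = 1 := mul_inv_cancel₀ (norm_ne_zero_iff.2 hq)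
  nlinarith [norm_nonneg q]

theorem conj_eq_self_or_eq_inv_of_im_eq_zero_or_norm_eq_one {b : ℂ} (hb : b.im = 0 ∨ ‖b‖ = 1) :
    starRingEnd ℂ b = b ∨ starRingEnd ℂ b = b⁻¹ :=
  hb.imp Complex.conj_eq_iff_im.2 fun h ↦ (Complex.inv_eq_conj h).symm

theorem qdlIntegrand_neg_neg (b z w : ℂ) :
    qdlIntegrand b (-z) (-w) = -qdlIntegrand b z w := by
  simp only [qdlIntegrand, Complex.sinh_neg, neg_mul, neg_div, mul_neg, neg_neg, div_neg]

theorem qdlIntegrand_conj (b z w : ℂ) :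
    starRingEnd ℂ (qdlIntegrand b z w) =
      qdlIntegrand (starRingEnd ℂ b) (-starRingEnd ℂ z) (starRingEnd ℂ w) := by
  simp only [qdlIntegrand, map_div₀, map_mul, map_neg, map_ofNat, Complex.conj_I,
    ← Complex.exp_conj, ← Complex.sinh_conj]
  ring_nf

theorem qdlIntegrand_inv (b : ℂ) : qdlIntegrand b⁻¹ = qdlIntegrand b := by
  ext z w
  simp only [qdlIntegrand, div_inv_eq_mul, ← div_eq_mul_inv]
  ring

theorem qdlIntegrand_conj_param {b : ℂ} (hb : starRingEnd ℂ b = b ∨ starRingEnd ℂ b = b⁻¹) :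
    qdlIntegrand (starRingEnd ℂ b) = qdlIntegrand b := by
  rcases hb with h | h
  · rw [h]
  · rw [h, qdlIntegrand_inv]

theorem conj_integral_qdlIntegrand {b : ℂ} (hb : starRingEnd ℂ b = b ∨ starRingEnd ℂ b = b⁻¹)
    (z : ℂ) (ε : ℝ) :
    starRingEnd ℂ (∫ t : ℝ, qdlIntegrand b z (t + ε * Complex.I)) =
      -∫ t : ℝ, qdlIntegrand b (starRingEnd ℂ z) (t + ε * Complex.I) := by
  have hpointwise (t : ℝ) : starRingEnd ℂ (qdlIntegrand b z (t + ε * Complex.I)) =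
      -qdlIntegrand b (starRingEnd ℂ z) ((-t : ℝ) + ε * Complex.I) := by
    have hw : starRingEnd ℂ (t + ε * Complex.I) = -((-t : ℝ) + ε * Complex.I) := by
      simp only [map_add, map_mul, Complex.conj_ofReal, Complex.conj_I, Complex.ofReal_neg]
      ring
    rw [qdlIntegrand_conj, qdlIntegrand_conj_param hb, hw, qdlIntegrand_neg_neg]
  rw [← integral_conj, integral_congr_ae (.of_forall hpointwise), integral_neg,
    integral_neg_eq_self (fun t : ℝ ↦ qdlIntegrand b (starRingEnd ℂ z) (t + ε * Complex.I))]

theorem conj_qdl {b : ℂ} (hb : starRingEnd ℂ b = b ∨ starRingEnd ℂ b = b⁻¹) (z : ℂ) :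
    starRingEnd ℂ (qdl b z) = (qdl b (starRingEnd ℂ z))⁻¹ := by
  simp only [qdl, ← Complex.exp_conj, ← Complex.exp_neg, map_mul, map_div₀, map_one, map_ofNat,
    conj_integral_qdlIntegrand hb, mul_neg]

theorem qdl_unitarity_general (b : ℂ)
    (hb : b.im = 0 ∨ ‖b‖ = 1) :
    (∀ z : ℂ, |z.im| < (b + b⁻¹).re / 2 →
      (starRingEnd ℂ) (qdl b z) = 1 / qdl b ((starRingEnd ℂ) z)) ∧
    (b.im = 0 → ∀ x : ℝ, ‖qdl b (x : ℂ)‖ = 1) := by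
  have hconj := conj_eq_self_or_eq_inv_of_im_eq_zero_or_norm_eq_one hb
  refine ⟨fun z _ ↦ by rw [one_div, conj_qdl hconj], fun _ x ↦ ?_⟩
  refine Complex.norm_eq_one_of_conj_eq_inv (Complex.exp_ne_zero _) ?_
  rw [conj_qdl hconj, Complex.conj_ofReal]

/-- Unitarity: if `b` has positive real part and is either real or of modulus one, then
for every `z` in the strip `|Im z| < Im c_b = Re (b + b⁻¹)/2` one has
`conj (e_b(z)) = 1 / e_b(conj z)`; in particular for real `b` and real `x`,
`|e_b(x)| = 1`. -/
theorem qdl_unitarity (b : ℂ) (hre : 0 < b.re)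
    (hb : b.im = 0 ∨ ‖b‖ = 1) :
    (∀ z : ℂ, |z.im| < (b + b⁻¹).re / 2 →
      (starRingEnd ℂ) (qdl b z) = 1 / qdl b ((starRingEnd ℂ) z)) ∧
    (b.im = 0 → ∀ x : ℝ, ‖qdl b (x : ℂ)‖ = 1) :=
  qdl_unitarity_general b hb
end
end
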